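/- arXiv:2508.15128 — 3 statements merged into one kernel-verified Lean document; each statement's English description precedes it below -/
import Mathlib

section
/- (Metric Yoneda lemma) Let X be a generalized metric space with distance d taking values in [0, ∞], and let x ∈ X. For every nonexpansive co-presheaf φ : X → [0, ∞], the distance in the function space from the representable co-presheaf y ↦ d(y, x) to φ equals φ(x); concretely, ⨆_{y ∈ X} (φ(y) ∸ d(y, x)) = φ(x), where ∸ is truncated subtraction in [0, ∞]. -/
open ENNReal

theorem metric_yoneda_general {X : Type*} (d : X → X → ℝ≥0∞)
    (hrefl : ∀ x : X, d x x = 0)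
    (x : X) (φ : X → ℝ≥0∞) (hφ : ∀ y z : X, φ z - φ y ≤ d z y) :
    ⨆ y : X, (φ y - d y x) = φ x := by
  refine le_antisymm (iSup_le fun y => ?_) (le_iSup_of_le x ?_)
  · exact tsub_le_iff_tsub_le.mp (hφ x y)
  · rw [hrefl, tsub_zero]

/-- The metric Yoneda lemma for generalized metric spaces: for a generalized
metric `d : X → X → [0,∞]` (reflexive, satisfying the triangle inequality) and
any nonexpansive co-presheaf `φ : X → [0,∞]`, the function-space distance from
the representable co-presheaf `y ↦ d y x` to `φ` equals `φ x`:
`⨆ y, (φ y - d y x) = φ x`, where `-` is truncated subtraction in `[0,∞]`. -/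
theorem metric_yoneda {X : Type*} (d : X → X → ℝ≥0∞)
    (hrefl : ∀ x : X, d x x = 0)
    (htri : ∀ x y z : X, d x z ≤ d x y + d y z)
    (x : X) (φ : X → ℝ≥0∞) (hφ : ∀ y z : X, φ z - φ y ≤ d z y) :
    ⨆ y : X, (φ y - d y x) = φ x :=
  metric_yoneda_general d hrefl x φ hφ
end

section
/- (Convergence of value iteration) For a finite MDP with discount factor γ ∈ [0, 1), the optimal Bellman operator T* has a unique fixed point V* (the optimal value function satisfying V*(s) = max_{a ∈ A}(R(s, a) + γ · Σ_{s′} P(s, a, s′) · V*(s′)) for all s), and for every initial value function V⁰ the value iteration sequence V^{t+1} = T*(V^t) converges to V* in the supremum norm as t → ∞. -/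
open Finset Filter

/-- The optimal Bellman operator of a finite MDP. -/
noncomputable def bellmanOpt {S A : Type*} [Fintype S] [Fintype A] [Nonempty A]
    (P : S → A → S → ℝ) (R : S → A → ℝ) (γ : ℝ) (V : S → ℝ) (s : S) : ℝ :=
  univ.sup' univ_nonempty fun a => R s a + γ * ∑ s', P s a s' * V s'

lemma sup_diff_le {A : Type*} [Fintype A] [Nonempty A] (f g : A → ℝ) (c : ℝ)
    (h : ∀ a, f a - g a ≤ c) :
    (univ.sup' univ_nonempty f) - (univ.sup' univ_nonempty g) ≤ c := by
  rw [sub_le_iff_le_add']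
  apply Finset.sup'_le
  intro a _
  calc f a ≤ g a + c := by linarith [h a]
    _ ≤ univ.sup' univ_nonempty g + c := by
        gcongr; exact Finset.le_sup' g (mem_univ a)

lemma abs_sup_diff_le {A : Type*} [Fintype A] [Nonempty A] (f g : A → ℝ) (c : ℝ)
    (h : ∀ a, |f a - g a| ≤ c) :
    |(univ.sup' univ_nonempty f) - (univ.sup' univ_nonempty g)| ≤ c := by
  rw [abs_le]
  constructor
  · have := sup_diff_le g f c (fun a => by
      have := h a; rw [abs_le] at this; linarith [this.1])
    linarith
  · exact sup_diff_le f g c (fun a => by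
      have := h a; rw [abs_le] at this; linarith [this.2])

lemma sup_abs_eq_dist {S : Type*} [Fintype S] [Nonempty S] (f g : S → ℝ) :
    (univ.sup' univ_nonempty fun s => |f s - g s|) = dist f g := by
  apply le_antisymm
  · apply Finset.sup'_le
    intro s _
    rw [← Real.dist_eq]
    exact dist_le_pi_dist f g s
  · have hnn : (0:ℝ) ≤ univ.sup' univ_nonempty fun s => |f s - g s| := by
      obtain ⟨s⟩ := ‹Nonempty S›
      exact le_trans (abs_nonneg _) (Finset.le_sup' (fun s => |f s - g s|) (mem_univ s))
    rw [dist_pi_le_iff hnn]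
    intro s
    rw [Real.dist_eq]
    exact Finset.le_sup' (fun s => |f s - g s|) (mem_univ s)

/-- Convergence of value iteration: for a finite MDP with discount factor
`γ ∈ [0, 1)`, the optimal Bellman operator `T*` has a unique fixed point `V*`
(the optimal value function), and for every initial value function `V⁰` the
value-iteration iterates `T*^[t] V⁰` converge to `V*` in the supremum norm. -/
theorem value_iteration_convergence
    {S A : Type*} [Fintype S] [Nonempty S] [Fintype A] [Nonempty A]
    (P : S → A → S → ℝ)
    (hP0 : ∀ s a s', 0 ≤ P s a s') (hP1 : ∀ s a, ∑ s', P s a s' = 1)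
    (R : S → A → ℝ) (γ : ℝ) (hγ0 : 0 ≤ γ) (hγ1 : γ < 1) :
    ∃ Vstar : S → ℝ,
      bellmanOpt P R γ Vstar = Vstar ∧
      (∀ W : S → ℝ, bellmanOpt P R γ W = W → W = Vstar) ∧
      ∀ V0 : S → ℝ,
        Tendsto
          (fun t : ℕ => univ.sup' univ_nonempty fun s =>
            |(bellmanOpt P R γ)^[t] V0 s - Vstar s|)
          atTop (nhds 0) := by
  set T := bellmanOpt P R γ with hT
  have key : ∀ V W : S → ℝ, ∀ s, |T V s - T W s| ≤ γ * dist V W := by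
    intro V W s
    apply abs_sup_diff_le
    intro a
    have : (R s a + γ * ∑ s', P s a s' * V s') - (R s a + γ * ∑ s', P s a s' * W s')
        = γ * ∑ s', P s a s' * (V s' - W s') := by
      rw [add_sub_add_left_eq_sub, ← mul_sub, ← Finset.sum_sub_distrib]
      congr 1
      exact Finset.sum_congr rfl fun s' _ => by ring
    rw [this, abs_mul, abs_of_nonneg hγ0]
    gcongr
    calc |∑ s', P s a s' * (V s' - W s')| ≤ ∑ s', |P s a s' * (V s' - W s')| :=
          Finset.abs_sum_le_sum_abs _ _
      _ ≤ ∑ s', P s a s' * dist V W := by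
          apply Finset.sum_le_sum
          intro s' _
          rw [abs_mul, abs_of_nonneg (hP0 s a s')]
          gcongr
          · exact hP0 s a s'
          · rw [← Real.dist_eq]; exact dist_le_pi_dist V W s'
      _ = dist V W := by rw [← Finset.sum_mul, hP1, one_mul]
  have hLip : LipschitzWith ⟨γ, hγ0⟩ T := by
    apply LipschitzWith.of_dist_le_mul
    intro V W
    show dist (T V) (T W) ≤ γ * dist V W
    rw [dist_pi_le_iff (mul_nonneg hγ0 dist_nonneg)]
    intro s
    rw [Real.dist_eq]
    exact key V W s
  have hC : ContractingWith ⟨γ, hγ0⟩ T := ⟨by exact_mod_cast hγ1, hLip⟩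
  refine ⟨hC.fixedPoint T, ?_, ?_, ?_⟩
  · exact hC.fixedPoint_isFixedPt
  · intro W hW
    exact hC.fixedPoint_unique hW
  · intro V0
    have h1 : Tendsto (fun t => T^[t] V0) atTop (nhds (hC.fixedPoint T)) :=
      hC.tendsto_iterate_fixedPoint V0
    have h2 : Tendsto (fun t => dist (T^[t] V0) (hC.fixedPoint T)) atTop (nhds 0) :=
      (tendsto_iff_dist_tendsto_zero).mp h1
    convert h2 using 2 with t
    exact sup_abs_eq_dist _ _
end

section
/- (Asynchronous Convergence Theorem) Let ι be a finite nonempty index type, let each Xᵢ be a metric space, let X = Π_{i ∈ ι} Xᵢ with the product topology, and let f : X → X with components fᵢ : X → Xᵢ. Suppose there are sets B(k)ᵢ ⊆ Xᵢ for each k ∈ ℕ and i ∈ ι, with X(k) = { x ∈ X | ∀ i, xᵢ ∈ B(k)ᵢ } (box condition), satisfying: (nestedness) X(k+1) ⊆ X(k) for all k; (synchronous convergence) f maps X(k) into X(k+1) for all k, and for any sequence (yᵏ) with yᵏ ∈ X(k) for every k, every cluster point of (yᵏ) is a fixed point of f. Consider an asynchronous iteration x : ℕ → X where for each i there is an infinite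 set Tⁱ ⊆ ℕ of update times and delay functions τⁱⱼ : ℕ → ℕ with τⁱⱼ(t) ≤ t and τⁱⱼ(t) → ∞ as t → ∞, such that x(t+1)ᵢ = fᵢ( (x(τⁱⱼ(t))ⱼ)_{j ∈ ι} ) for t ∈ Tⁱ and x(t+1)ᵢ = x(t)ᵢ for t ∉ Tⁱ. If the initial estimate satisfies x(0) ∈ X(0) (and all initial delayed values lie in X(0)), then every cluster point of the sequence (x(t)) is a fixed point of f. -/
/-!
By induction on `k`, the asynchronous iterates eventually stay in the box `X(k)`. Once they
lie in `X(k)` from time `N` on, the delays `τ i j t → ∞` make every delayed argument of `f`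
lie in `X(k)` from some time `M` on; after its first update time past `M`, component `i`
then stays in `B (k+1) i`, since updates land there by synchronous convergence and
non-updates keep the value. The box structure makes this componentwise argument suffice,
and finitely many components give a common time. A diagonal subsequence converging to a
cluster point then has its `k`-th term in `X(k)`, so the cluster point is fixed.
-/

open Filter Topology

theorem eventually_mem_of_eventually_update_mem {α : Type*} {u : ℕ → α} {T : Set ℕ}
    {S : Set α} (hT : T.Infinite) (hconst : ∀ t ∉ T, u (t + 1) = u t)
    (hS : ∀ᶠ t in atTop, t ∈ T → u (t + 1) ∈ S) : ∀ᶠ t in atTop, u t ∈ S := by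
  obtain ⟨M, hM⟩ := eventually_atTop.1 hS
  obtain ⟨s, hsT, hMs⟩ := hT.exists_gt M
  refine eventually_atTop.2 ⟨s + 1, fun t hst => ?_⟩
  induction t, hst using Nat.le_induction with
  | base => exact hM s hMs.le hsT
  | succ t hst ih =>
    by_cases htT : t ∈ T
    · exact hM t (by omega) htT
    · rwa [hconst t htT]

theorem exists_tendsto_forall_mem_of_mapClusterPt {X : Type*} [TopologicalSpace X]
    [FirstCountableTopology X] {x : ℕ → X} {p : X} {S : ℕ → Set X}
    (hp : MapClusterPt p atTop x) (hS : ∀ k, ∀ᶠ t in atTop, x t ∈ S k) :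
    ∃ y : ℕ → X, (∀ k, y k ∈ S k) ∧ Tendsto y atTop (𝓝 p) := by
  obtain ⟨ψ, hψ, hψp⟩ := hp.tendsto_subseq
  obtain ⟨φ, hφ, hφS⟩ := extraction_forall_of_eventually
    fun k => hψ.tendsto_atTop.eventually (hS k)
  exact ⟨fun k => x (ψ (φ k)), hφS, hψp.comp hφ.tendsto_atTop⟩

section AsynchronousIteration

variable {ι : Type*} {Xi : ι → Type*} {f : (∀ i, Xi i) → ∀ i, Xi i}
  {B : ℕ → ∀ i, Set (Xi i)} {x : ℕ → ∀ i, Xi i} {T : ι → Set ℕ} {τ : ι → ι → ℕ → ℕ}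

theorem async_iterate_mem_box_zero
    (hnested : ∀ k (x : ∀ i, Xi i), (∀ i, x i ∈ B (k + 1) i) → ∀ i, x i ∈ B k i)
    (hsync : ∀ k (x : ∀ i, Xi i), (∀ i, x i ∈ B k i) → ∀ i, f x i ∈ B (k + 1) i)
    (hτle : ∀ i j t, τ i j t ≤ t)
    (hupd : ∀ i t, t ∈ T i → x (t + 1) i = f (fun j => x (τ i j t) j) i)
    (hnoupd : ∀ i t, t ∉ T i → x (t + 1) i = x t i)
    (hinit : ∀ i, x 0 i ∈ B 0 i) (t : ℕ) (i : ι) : x t i ∈ B 0 i := by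
  induction t using Nat.strong_induction_on generalizing i with
  | _ t ih =>
    match t with
    | 0 => exact hinit i
    | t + 1 =>
      by_cases htT : t ∈ T i
      · rw [hupd i t htT]
        exact hnested 0 _ (hsync 0 _ fun j => ih _ (Nat.lt_succ_of_le (hτle i j t)) j) i
      · rw [hnoupd i t htT]
        exact ih t t.lt_succ_self i

theorem async_eventually_mem_box_succ [Finite ι]
    (hsync : ∀ k (x : ∀ i, Xi i), (∀ i, x i ∈ B k i) → ∀ i, f x i ∈ B (k + 1) i)
    (hT : ∀ i, (T i).Infinite) (hτtop : ∀ i j, Tendsto (τ i j) atTop atTop)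
    (hupd : ∀ i t, t ∈ T i → x (t + 1) i = f (fun j => x (τ i j t) j) i)
    (hnoupd : ∀ i t, t ∉ T i → x (t + 1) i = x t i) {k : ℕ}
    (hk : ∀ᶠ t in atTop, ∀ i, x t i ∈ B k i) :
    ∀ᶠ t in atTop, ∀ i, x t i ∈ B (k + 1) i := by
  refine eventually_all.2 fun i => eventually_mem_of_eventually_update_mem (u := fun t => x t i)
    (hT i) (hnoupd i) ?_
  have hdelayed : ∀ᶠ t in atTop, ∀ j, x (τ i j t) j ∈ B k j :=
    eventually_all.2 fun j => (hτtop i j).eventually (hk.mono fun t ht => ht j)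
  filter_upwards [hdelayed] with t ht htT
  rw [hupd i t htT]
  exact hsync k _ ht i

end AsynchronousIteration

theorem asynchronous_convergence_theorem_general
    {ι : Type*} [Fintype ι]
    {Xi : ι → Type*} [∀ i, MetricSpace (Xi i)]
    (f : (∀ i, Xi i) → (∀ i, Xi i))
    (B : ℕ → ∀ i, Set (Xi i))
    (hnested : ∀ k (x : ∀ i, Xi i), (∀ i, x i ∈ B (k + 1) i) → ∀ i, x i ∈ B k i)
    (hsync : ∀ k (x : ∀ i, Xi i), (∀ i, x i ∈ B k i) → ∀ i, f x i ∈ B (k + 1) i)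
    (hfix : ∀ y : ℕ → ∀ i, Xi i, (∀ k i, y k i ∈ B k i) →
      ∀ p : ∀ i, Xi i, MapClusterPt p atTop y → f p = p)
    (x : ℕ → ∀ i, Xi i)
    (T : ι → Set ℕ) (hT : ∀ i, (T i).Infinite)
    (τ : ι → ι → ℕ → ℕ)
    (hτle : ∀ i j t, τ i j t ≤ t)
    (hτtop : ∀ i j, Tendsto (τ i j) atTop atTop)
    (hupd : ∀ i t, t ∈ T i → x (t + 1) i = f (fun j => x (τ i j t) j) i)
    (hnoupd : ∀ i t, t ∉ T i → x (t + 1) i = x t i)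
    (hinit : ∀ i, x 0 i ∈ B 0 i) :
    ∀ p : ∀ i, Xi i, MapClusterPt p atTop x → f p = p := by
  have hbox : ∀ k, ∀ᶠ t in atTop, ∀ i, x t i ∈ B k i := by
    intro k
    induction k with
    | zero =>
      exact .of_forall (async_iterate_mem_box_zero hnested hsync hτle hupd hnoupd hinit)
    | succ k ih => exact async_eventually_mem_box_succ hsync hT hτtop hupd hnoupd ih
  intro p hp
  obtain ⟨y, hyB, hyp⟩ := exists_tendsto_forall_mem_of_mapClusterPt
    (S := fun k => {z : ∀ i, Xi i | ∀ i, z i ∈ B k i}) hp hbox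
  exact hfix y hyB p hyp.mapClusterPt

/-- The Asynchronous Convergence Theorem (Bertsekas–Tsitsiklis): given a finite
product of metric spaces `X = Π i, Xi i` with the product topology, a map
`f : X → X`, and a nested family of box sets `X(k) = {x | ∀ i, x i ∈ B k i}`
satisfying the synchronous convergence condition (`f` maps `X(k)` into
`X(k+1)`, and every cluster point of any sequence `yᵏ ∈ X(k)` is a fixed point
of `f`), any asynchronous iteration `x : ℕ → X` — where each component `i` is
updated at an infinite set of times `T i` using delayed information
`τ i j t ≤ t` with `τ i j t → ∞`, and is left unchanged otherwise — that starts
in `X(0)` has the property that every cluster point of `(x t)` is a fixed point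
of `f`. -/
theorem asynchronous_convergence_theorem
    {ι : Type*} [Fintype ι] [Nonempty ι]
    {Xi : ι → Type*} [∀ i, MetricSpace (Xi i)]
    (f : (∀ i, Xi i) → (∀ i, Xi i))
    (B : ℕ → ∀ i, Set (Xi i))
    (hnested : ∀ k (x : ∀ i, Xi i), (∀ i, x i ∈ B (k + 1) i) → ∀ i, x i ∈ B k i)
    (hsync : ∀ k (x : ∀ i, Xi i), (∀ i, x i ∈ B k i) → ∀ i, f x i ∈ B (k + 1) i)
    (hfix : ∀ y : ℕ → ∀ i, Xi i, (∀ k i, y k i ∈ B k i) →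
      ∀ p : ∀ i, Xi i, MapClusterPt p atTop y → f p = p)
    (x : ℕ → ∀ i, Xi i)
    (T : ι → Set ℕ) (hT : ∀ i, (T i).Infinite)
    (τ : ι → ι → ℕ → ℕ)
    (hτle : ∀ i j t, τ i j t ≤ t)
    (hτtop : ∀ i j, Tendsto (τ i j) atTop atTop)
    (hupd : ∀ i t, t ∈ T i → x (t + 1) i = f (fun j => x (τ i j t) j) i)
    (hnoupd : ∀ i t, t ∉ T i → x (t + 1) i = x t i)
    (hinit : ∀ i, x 0 i ∈ B 0 i) :
    ∀ p : ∀ i, Xi i, MapClusterPt p atTop x → f p = p :=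
  asynchronous_convergence_theorem_general f B hnested hsync hfix x T hT τ hτle hτtop hupd hnoupd
    hinit
end
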